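/- arXiv:1607.02603 — 3 statements merged into one kernel-verified Lean document; each statement's English description precedes it below -/
import Mathlib

section
/- Vanishing of the normal flux under the MIT bag boundary condition: for every unit vector n ∈ ℝ³ and every ψ ∈ ℂ⁴ with 𝓑(n)ψ = ψ, one has ⟨ψ, (α·n)ψ⟩ = 0 (inner product of ℂ⁴); i.e. the component n·j of the current density j = (⟨ψ, α_kψ⟩)_{k=1,2,3} vanishes. -/
open Matrix Complex

noncomputable section

/-- The Pauli matrices. -/
def σ : Fin 3 → Matrix (Fin 2) (Fin 2) ℂ :=
  ![!![0, 1; 1, 0], !![0, -Complex.I; Complex.I, 0], !![1, 0; 0, -1]]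

/-- Assemble a 4×4 matrix from four 2×2 blocks. -/
def blk (A B C D : Matrix (Fin 2) (Fin 2) ℂ) : Matrix (Fin 4) (Fin 4) ℂ :=
  Matrix.reindex finSumFinEquiv finSumFinEquiv (Matrix.fromBlocks A B C D)

/-- The Dirac matrix β. -/
def diracβ : Matrix (Fin 4) (Fin 4) ℂ := blk 1 0 0 (-1)

/-- The Dirac matrix γ₅. -/
def diracγ5 : Matrix (Fin 4) (Fin 4) ℂ := blk 0 1 1 0

/-- The Dirac matrices α₁, α₂, α₃ (indexed by `Fin 3`). -/
def diracα (k : Fin 3) : Matrix (Fin 4) (Fin 4) ℂ := blk 0 (σ k) (σ k) 0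

/-- For `x ∈ ℝ³`, the matrix `α · x = x₁ α₁ + x₂ α₂ + x₃ α₃`. -/
def αdot (x : Fin 3 → ℝ) : Matrix (Fin 4) (Fin 4) ℂ := ∑ k, (x k : ℂ) • diracα k

/-- The MIT bag boundary matrix `𝓑(n) = -iβ(α·n)`. -/
def mitB (n : Fin 3 → ℝ) : Matrix (Fin 4) (Fin 4) ℂ := -Complex.I • (diracβ * αdot n)

lemma blk_mul (A B C D A' B' C' D' : Matrix (Fin 2) (Fin 2) ℂ) :
    blk A B C D * blk A' B' C' D' =
    blk (A*A'+B*C') (A*B'+B*D') (C*A'+D*C') (C*B'+D*D') := by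
  simp [blk, Matrix.reindex_apply, Matrix.submatrix_mul_equiv, Matrix.fromBlocks_multiply]

lemma blk_smul (c : ℂ) (A B C D : Matrix (Fin 2) (Fin 2) ℂ) :
    c • blk A B C D = blk (c•A) (c•B) (c•C) (c•D) := by
  ext i j
  cases hi : (finSumFinEquiv.symm i : Fin 2 ⊕ Fin 2) <;>
    cases hj : (finSumFinEquiv.symm j : Fin 2 ⊕ Fin 2) <;>
    simp [blk, Matrix.fromBlocks, Matrix.submatrix_apply, hi, hj]

lemma blk_add (A B C D A' B' C' D' : Matrix (Fin 2) (Fin 2) ℂ) :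
    blk A B C D + blk A' B' C' D' = blk (A+A') (B+B') (C+C') (D+D') := by
  ext i j
  cases hi : (finSumFinEquiv.symm i : Fin 2 ⊕ Fin 2) <;>
    cases hj : (finSumFinEquiv.symm j : Fin 2 ⊕ Fin 2) <;>
    simp [blk, Matrix.fromBlocks, Matrix.submatrix_apply, hi, hj]

lemma blk_conjT (A B C D : Matrix (Fin 2) (Fin 2) ℂ) :
    (blk A B C D)ᴴ = blk Aᴴ Cᴴ Bᴴ Dᴴ := by
  simp [blk, Matrix.reindex_apply, Matrix.conjTranspose_submatrix,
    Matrix.fromBlocks_conjTranspose]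

/-- The 2×2 matrix `σ · n`. -/
def Sm (n : Fin 3 → ℝ) : Matrix (Fin 2) (Fin 2) ℂ :=
  !![(n 2 : ℂ), (n 0 : ℂ) - (n 1 : ℂ) * Complex.I;
     (n 0 : ℂ) + (n 1 : ℂ) * Complex.I, -(n 2 : ℂ)]

lemma αdot_eq (n : Fin 3 → ℝ) : αdot n = blk 0 (Sm n) (Sm n) 0 := by
  have h : (n 0 : ℂ) • σ 0 + (n 1 : ℂ) • σ 1 + (n 2 : ℂ) • σ 2 = Sm n := by
    ext i j
    fin_cases i <;> fin_cases j <;> simp [σ, Sm] <;> ring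
  simp only [αdot, Fin.sum_univ_three, diracα, blk_smul, blk_add, smul_zero, add_zero,
    zero_add, h]

lemma Sm_mul_Sm (n : Fin 3 → ℝ) (hn : ∑ i, n i ^ 2 = 1) : Sm n * Sm n = 1 := by
  have h : ((n 0 : ℂ))^2 + (n 1 : ℂ)^2 + (n 2 : ℂ)^2 = 1 := by
    have := hn
    rw [Fin.sum_univ_three] at this
    exact_mod_cast this
  ext i j
  fin_cases i <;> fin_cases j <;>
    simp [Sm, Matrix.mul_apply, Fin.sum_univ_two, Matrix.one_apply, Complex.I_sq] <;>
    first
    | linear_combination h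
    | linear_combination -h
    | linear_combination h - ((n 1 : ℂ))^2 * Complex.I_sq
    | linear_combination -h + ((n 1 : ℂ))^2 * Complex.I_sq
    | linear_combination ((n 1 : ℂ))^2 * Complex.I_sq
    | linear_combination -((n 1 : ℂ))^2 * Complex.I_sq
    | ring

lemma Sm_conjT (n : Fin 3 → ℝ) : (Sm n)ᴴ = Sm n := by
  ext i j
  fin_cases i <;> fin_cases j <;>
    simp [Sm, Matrix.conjTranspose_apply] <;> ring

/-- `(α·n) • 𝓑(n) = i • β` when `|n| = 1`. -/
lemma αdot_mul_mitB (n : Fin 3 → ℝ) (hn : ∑ i, n i ^ 2 = 1) :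
    αdot n * mitB n = Complex.I • diracβ := by
  rw [mitB, Matrix.mul_smul, αdot_eq, diracβ, blk_mul, blk_mul]
  simp only [Matrix.zero_mul, Matrix.mul_zero, Matrix.one_mul, Matrix.mul_one,
    Matrix.neg_mul, Matrix.mul_neg, add_zero, zero_add]
  rw [Sm_mul_Sm n hn, blk_smul, blk_smul]
  congr 1 <;> simp

/-- `𝓑(n)ᴴ * (α·n) = -i • β` when `|n| = 1`. -/
lemma mitB_conjT_mul_αdot (n : Fin 3 → ℝ) (hn : ∑ i, n i ^ 2 = 1) :
    (mitB n)ᴴ * αdot n = -Complex.I • diracβ := by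
  have hβA : (diracβ * αdot n)ᴴ = αdot n * diracβ := by
    rw [Matrix.conjTranspose_mul, αdot_eq, diracβ, blk_conjT, blk_conjT, Sm_conjT]
    simp
  rw [mitB, Matrix.conjTranspose_smul, hβA]
  rw [Matrix.smul_mul, Matrix.mul_assoc]
  rw [αdot_eq, diracβ, blk_mul, blk_mul]
  simp only [Matrix.zero_mul, Matrix.mul_zero, Matrix.one_mul, Matrix.mul_one,
    Matrix.neg_mul, Matrix.mul_neg, add_zero, zero_add]
  rw [Sm_mul_Sm n hn, blk_smul, blk_smul]
  congr 1 <;> simp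

/-- Vanishing of the normal flux under the MIT bag boundary condition:
if `𝓑(n)ψ = ψ` then `⟨ψ, (α·n)ψ⟩ = 0`, i.e. `n · j = 0` where
`j = (⟨ψ, α_k ψ⟩)_{k}` is the current density. -/
theorem normal_flux_vanishes (n : Fin 3 → ℝ) (hn : ∑ i, n i ^ 2 = 1)
    (ψ : Fin 4 → ℂ) (hψ : mitB n *ᵥ ψ = ψ) :
    star ψ ⬝ᵥ (αdot n *ᵥ ψ) = 0 ∧
    ∑ k, (n k : ℂ) * (star ψ ⬝ᵥ (diracα k *ᵥ ψ)) = 0 := by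
  set t : ℂ := star ψ ⬝ᵥ (diracβ *ᵥ ψ) with ht
  have h1 : star ψ ⬝ᵥ (αdot n *ᵥ ψ) = Complex.I * t := by
    have e : αdot n *ᵥ ψ = αdot n *ᵥ (mitB n *ᵥ ψ) := by rw [hψ]
    rw [e, Matrix.mulVec_mulVec, αdot_mul_mitB n hn, Matrix.smul_mulVec,
      dotProduct_smul, ht, smul_eq_mul]
  have h2 : star ψ ⬝ᵥ (αdot n *ᵥ ψ) = -Complex.I * t := by
    have e : star ψ ⬝ᵥ (αdot n *ᵥ ψ) = star (mitB n *ᵥ ψ) ⬝ᵥ (αdot n *ᵥ ψ) := by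
      rw [hψ]
    rw [e, Matrix.star_mulVec, Matrix.dotProduct_mulVec, Matrix.vecMul_vecMul,
      mitB_conjT_mul_αdot n hn, ← Matrix.dotProduct_mulVec, Matrix.smul_mulVec,
      dotProduct_smul, ht, smul_eq_mul]
  have hs : star ψ ⬝ᵥ (αdot n *ᵥ ψ) = 0 := by
    have := h1.symm.trans h2
    have h3 : (2 * Complex.I) * t = 0 := by linear_combination this
    have : t = 0 := by
      rcases mul_eq_zero.mp h3 with h | h
      · exact absurd h (by norm_num [Complex.I_ne_zero])
      · exact h
    rw [h1, this, mul_zero]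
  refine ⟨hs, ?_⟩
  calc ∑ k, (n k : ℂ) * (star ψ ⬝ᵥ (diracα k *ᵥ ψ))
      = star ψ ⬝ᵥ (αdot n *ᵥ ψ) := by
        simp only [αdot, dotProduct, Matrix.mulVec, Matrix.sum_apply,
          Matrix.smul_apply, smul_eq_mul, Finset.sum_mul, Finset.mul_sum]
        rw [Finset.sum_comm]
        refine Finset.sum_congr rfl fun i _ => ?_
        rw [Finset.sum_comm]
        refine Finset.sum_congr rfl fun k _ => ?_
        exact Finset.sum_congr rfl fun j _ => by ring
    _ = 0 := hs
end
end

section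
/- Pointwise IMS localization formula: let d ≥ 1, let ψ : ℝ^d → ℂ and χ : ℝ^d → ℝ be differentiable at a point x ∈ ℝ^d. Then Re⟨∇ψ(x), ∇(χ²ψ)(x)⟩ = ‖∇(χψ)(x)‖² − |ψ(x)|²·‖∇χ(x)‖², where ⟨u, v⟩ = Σ_{j=1}^d conj(u_j)v_j is the inner product of ℂ^d, ∇ denotes the gradient, and the gradient of a ℂ-valued function is taken componentwise on real and imaginary parts. -/
/-!
By the Leibniz rule each directional derivative splits as `∂(χψ) = χ ∂ψ + (∂χ) ψ` and
`∂(χ²ψ) = χ² ∂ψ + 2χ (∂χ) ψ`, so the formula holds term by term: both sides equal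
`χ²|∂ψ|² + 2χ (∂χ) Re(conj(∂ψ) ψ)`.
-/

open Complex

theorem re_conj_mul_ofReal_sq_mul_add (a p : ℂ) (b c : ℝ) :
    (starRingEnd ℂ a * (c ^ 2 * a + 2 * c * b * p)).re =
      normSq (c * a + b * p) - normSq p * b ^ 2 := by
  simp only [normSq_apply, mul_re, mul_im, add_re, add_im, conj_re, conj_im, ofReal_re,
    ofReal_im, ← ofReal_pow, re_ofNat, im_ofNat]
  ring

section

variable {E : Type*} [NormedAddCommGroup E] [NormedSpace ℝ E] {χ : E → ℝ} {ψ : E → ℂ} {x : E}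

theorem fderiv_ofReal_mul_apply (hχ : DifferentiableAt ℝ χ x) (hψ : DifferentiableAt ℝ ψ x)
    (v : E) :
    fderiv ℝ (fun y => (χ y : ℂ) * ψ y) x v = χ x * fderiv ℝ ψ x v + fderiv ℝ χ x v * ψ x := by
  simp_rw [← real_smul]
  rw [fderiv_fun_smul hχ hψ]
  simp [real_smul]

theorem fderiv_ofReal_sq_mul_apply (hχ : DifferentiableAt ℝ χ x) (hψ : DifferentiableAt ℝ ψ x)
    (v : E) :
    fderiv ℝ (fun y => (χ y : ℂ) ^ 2 * ψ y) x v =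
      χ x ^ 2 * fderiv ℝ ψ x v + 2 * χ x * fderiv ℝ χ x v * ψ x := by
  simp_rw [← ofReal_pow]
  rw [fderiv_ofReal_mul_apply (hχ.fun_pow 2) hψ, fderiv_fun_pow 2 hχ]
  simp

end

theorem ims_localization_general (d : ℕ)
    (ψ : (Fin d → ℝ) → ℂ) (χ : (Fin d → ℝ) → ℝ) (x : Fin d → ℝ)
    (hψ : DifferentiableAt ℝ ψ x) (hχ : DifferentiableAt ℝ χ x) :
    (∑ j, (starRingEnd ℂ) (fderiv ℝ ψ x (Pi.single j 1)) *
        fderiv ℝ (fun y => ((χ y : ℂ) ^ 2) * ψ y) x (Pi.single j 1)).re =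
      ∑ j, Complex.normSq (fderiv ℝ (fun y => (χ y : ℂ) * ψ y) x (Pi.single j 1)) -
        Complex.normSq (ψ x) * ∑ j, (fderiv ℝ χ x (Pi.single j 1)) ^ 2 := by
  rw [re_sum, Finset.mul_sum, ← Finset.sum_sub_distrib]
  refine Finset.sum_congr rfl fun j _ => ?_
  rw [fderiv_ofReal_sq_mul_apply hχ hψ, fderiv_ofReal_mul_apply hχ hψ]
  exact re_conj_mul_ofReal_sq_mul_add _ _ _ _

/-- Pointwise IMS localization formula:
`Re⟨∇ψ(x), ∇(χ²ψ)(x)⟩ = ‖∇(χψ)(x)‖² − |ψ(x)|²‖∇χ(x)‖²`, where the gradient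
components are the directional derivatives along the standard basis vectors. -/
theorem ims_localization (d : ℕ) (hd : 1 ≤ d)
    (ψ : (Fin d → ℝ) → ℂ) (χ : (Fin d → ℝ) → ℝ) (x : Fin d → ℝ)
    (hψ : DifferentiableAt ℝ ψ x) (hχ : DifferentiableAt ℝ χ x) :
    (∑ j, (starRingEnd ℂ) (fderiv ℝ ψ x (Pi.single j 1)) *
        fderiv ℝ (fun y => ((χ y : ℂ) ^ 2) * ψ y) x (Pi.single j 1)).re =
      ∑ j, Complex.normSq (fderiv ℝ (fun y => (χ y : ℂ) * ψ y) x (Pi.single j 1)) -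
        Complex.normSq (ψ x) * ∑ j, (fderiv ℝ χ x (Pi.single j 1)) ^ 2 :=
  ims_localization_general d ψ χ x hψ hχ
end

section
/- Second-order coefficient in the expansion of the lowest Robin eigenvalue: for all κ, K ∈ ℝ, with ψ₀(τ) = √2·e^{−τ} and ψ₁(τ) = (κ/√2)·τ·e^{−τ}, one has ∫₀^∞ (κ·ψ₁'(τ) + (κ² − 2K)·τ·ψ₀'(τ))·ψ₀(τ) dτ = K − κ²/4. Equivalently, the unique λ₂ ∈ ℝ for which ∫₀^∞ (λ₂·ψ₀(τ) − κ·ψ₁'(τ) − (κ² − 2K)·τ·ψ₀'(τ))·ψ₀(τ) dτ = 0 is λ₂ = K − κ²/4. -/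
/-!
Since `ψ₀' = -ψ₀` and `ψ₀² = 2e^{-2τ}`, both integrands are of the form `(a + bτ) e^{-2τ}`,
whose integral over `(0, ∞)` is `a/2 + b/4` (the Gamma integrals `Γ(1)` and `Γ(2)`). The second
integral is `λ₂ ∫ ψ₀²` minus the first one, and `∫ ψ₀² = 1`.
-/

open Real MeasureTheory

noncomputable section

/-- `ψ₀(τ) = √2 e^{−τ}`. -/
def ψ₀ : ℝ → ℝ := fun τ => Real.sqrt 2 * Real.exp (-τ)

/-- `ψ₁(τ) = (κ/√2) τ e^{−τ}`. -/
def ψ₁ (κ : ℝ) : ℝ → ℝ := fun τ => (κ / Real.sqrt 2) * τ * Real.exp (-τ)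

open Set

theorem integral_exp_neg_mul_Ioi_zero {c : ℝ} (hc : 0 < c) :
    ∫ t in Ioi (0 : ℝ), exp (-(c * t)) = 1 / c := by
  simpa using integral_rpow_mul_exp_neg_mul_Ioi one_pos hc

theorem integral_mul_exp_neg_mul_Ioi_zero {c : ℝ} (hc : 0 < c) :
    ∫ t in Ioi (0 : ℝ), t * exp (-(c * t)) = 1 / c ^ 2 := by
  have h := integral_rpow_mul_exp_neg_mul_Ioi two_pos hc
  rw [one_div]
  norm_num [rpow_two] at h
  exact h

theorem integrableOn_mul_exp_neg_mul_Ioi_zero {c : ℝ} (hc : 0 < c) :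
    IntegrableOn (fun t : ℝ => t * exp (-(c * t))) (Ioi 0) := by
  simpa [neg_mul] using
    integrableOn_rpow_mul_exp_neg_mul_rpow (s := 1) (p := 1) (by norm_num) one_pos hc

theorem integral_affine_mul_exp_neg_mul_Ioi_zero (a b : ℝ) {c : ℝ} (hc : 0 < c) :
    ∫ t in Ioi (0 : ℝ), (a + b * t) * exp (-(c * t)) = a / c + b / c ^ 2 := by
  have hexp : IntegrableOn (fun t : ℝ => exp (-(c * t))) (Ioi 0) := by
    simpa [neg_mul] using exp_neg_integrableOn_Ioi 0 hc
  simp_rw [add_mul, mul_assoc]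
  rw [integral_add (hexp.const_mul a) ((integrableOn_mul_exp_neg_mul_Ioi_zero hc).const_mul b),
    integral_const_mul, integral_const_mul, integral_exp_neg_mul_Ioi_zero hc,
    integral_mul_exp_neg_mul_Ioi_zero hc]
  ring

theorem deriv_ψ₀ (τ : ℝ) : deriv ψ₀ τ = -ψ₀ τ := by
  have h : HasDerivAt ψ₀ (√2 * (exp (-τ) * -1)) τ := ((hasDerivAt_neg τ).exp).const_mul √2
  rw [h.deriv, ψ₀]
  ring

theorem deriv_ψ₁ (κ τ : ℝ) : deriv (ψ₁ κ) τ = κ / √2 * (1 - τ) * exp (-τ) := by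
  have h : HasDerivAt (ψ₁ κ) (κ / √2 * 1 * exp (-τ) + κ / √2 * τ * (exp (-τ) * -1)) τ :=
    ((hasDerivAt_id τ).const_mul (κ / √2)).mul (hasDerivAt_neg τ).exp
  rw [h.deriv]
  ring

theorem ψ₀_mul_self (τ : ℝ) : ψ₀ τ * ψ₀ τ = 2 * exp (-(2 * τ)) := by
  rw [ψ₀, mul_mul_mul_comm, mul_self_sqrt zero_le_two, ← exp_add]
  ring_nf

theorem second_order_integrand_eq (κ K τ : ℝ) :
    (κ * deriv (ψ₁ κ) τ + (κ ^ 2 - 2 * K) * τ * deriv ψ₀ τ) * ψ₀ τ =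
      (κ ^ 2 + (4 * K - 3 * κ ^ 2) * τ) * exp (-(2 * τ)) := by
  have hsqrt : √2 ^ 2 = 2 := sq_sqrt zero_le_two
  have hexp : exp (-(2 * τ)) = exp (-τ) ^ 2 := by rw [← exp_nat_mul]; ring_nf
  rw [deriv_ψ₀, deriv_ψ₁, hexp, ψ₀]
  field_simp
  linear_combination -(τ * (κ ^ 2 - 2 * K)) * hsqrt

/-- Second-order coefficient in the expansion of the lowest Robin eigenvalue:
`∫₀^∞ (κψ₁' + (κ² − 2K)τψ₀')ψ₀ dτ = K − κ²/4`, and `λ₂ = K − κ²/4` is the unique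
real number such that `∫₀^∞ (λ₂ψ₀ − κψ₁' − (κ² − 2K)τψ₀')ψ₀ dτ = 0`. -/
theorem robin_second_order_coefficient (κ K : ℝ) :
    (∫ τ in Set.Ioi (0 : ℝ),
        (κ * deriv (ψ₁ κ) τ + (κ ^ 2 - 2 * K) * τ * deriv ψ₀ τ) * ψ₀ τ) =
      K - κ ^ 2 / 4 ∧
    ∀ lam2 : ℝ,
      (∫ τ in Set.Ioi (0 : ℝ),
          (lam2 * ψ₀ τ - κ * deriv (ψ₁ κ) τ - (κ ^ 2 - 2 * K) * τ * deriv ψ₀ τ) * ψ₀ τ) = 0 ↔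
        lam2 = K - κ ^ 2 / 4 := by
  have residual_eq (lam2 τ : ℝ) :
      (lam2 * ψ₀ τ - κ * deriv (ψ₁ κ) τ - (κ ^ 2 - 2 * K) * τ * deriv ψ₀ τ) * ψ₀ τ =
        (2 * lam2 - κ ^ 2 + (3 * κ ^ 2 - 4 * K) * τ) * exp (-(2 * τ)) := by
    linear_combination lam2 * ψ₀_mul_self τ - second_order_integrand_eq κ K τ
  refine ⟨?_, fun lam2 => ?_⟩
  · simp_rw [second_order_integrand_eq, integral_affine_mul_exp_neg_mul_Ioi_zero _ _ two_pos]
    ring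
  · simp_rw [residual_eq, integral_affine_mul_exp_neg_mul_Ioi_zero _ _ two_pos]
    constructor <;> intro h <;> linarith
end
end
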